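/- Quadratic fixed-point iteration bound: let (K_m)_{m≥0} be a sequence of monotone increasing continuous functions on [0,T] with K_0(0) = 0, K_m ≤ K_{m+1} pointwise, satisfying K_{m+1}(t) ≤ K_0(t) + C K_m(t)² + C K_m(t) t^γ for all 0 < t ≤ T and m ≥ 0, where C > 0 and γ > 0. Then there exists 0 < τ ≤ T and a constant C' such that K_m(t) ≤ C' K_0(t) for all 0 ≤ t ≤ τ and all m. -/

import Mathlib

/-!
Choose `τ` so small that `K₀ ≤ 1/(8C)` and `t^γ ≤ 1/(4C)` on `(0, τ]`. Then the bound
`K_m ≤ 2 K₀` propagates through the recursion, since `C (2K₀)² ≤ K₀/2` and `C (2K₀) t^γ ≤ K₀/2`.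
At `t = 0`, where the recursion is not assumed, the bound follows by continuity.
-/

open Filter Topology Set

lemma add_mul_sq_add_mul_mul_le_two_mul {C a k s : ℝ} (hC : 0 < C) (hk₀ : 0 ≤ k) (hk : k ≤ 2 * a)
    (ha : a ≤ 1 / (8 * C)) (hs : s ≤ 1 / (4 * C)) :
    a + C * k ^ 2 + C * k * s ≤ 2 * a := by
  rw [le_div_iff₀' (by positivity)] at ha hs
  have hsq : C * k ^ 2 ≤ a / 2 := by nlinarith [mul_le_mul hk hk hk₀ (hk₀.trans hk)]
  have hlin : C * k * s ≤ a / 2 := by nlinarith [mul_nonneg hC.le hk₀]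
  linarith

lemma le_two_mul_of_le_add_mul_sq_add_mul_mul {C s : ℝ} {u : ℕ → ℝ} (hC : 0 < C)
    (hu : ∀ m, 0 ≤ u m) (hu₀ : u 0 ≤ 1 / (8 * C)) (hs : s ≤ 1 / (4 * C))
    (hrec : ∀ m, u (m + 1) ≤ u 0 + C * u m ^ 2 + C * u m * s) (m : ℕ) : u m ≤ 2 * u 0 := by
  induction m with
  | zero => linarith [hu 0]
  | succ n ih =>
    exact (hrec n).trans (add_mul_sq_add_mul_mul_le_two_mul hC (hu n) ih hu₀ hs)

lemma exists_forall_Ioc_lt_of_continuousWithinAt {f : ℝ → ℝ} {T γ ε : ℝ} (hT : 0 < T)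
    (hf : ContinuousWithinAt f (Icc 0 T) 0) (hf₀ : f 0 = 0) (hγ : 0 < γ) (hε : 0 < ε) :
    ∃ τ, 0 < τ ∧ τ ≤ T ∧ ∀ t ∈ Ioc 0 τ, f t < ε ∧ t ^ γ < ε := by
  have hf' : Tendsto f (𝓝[>] 0) (𝓝 0) := by
    simpa [hf₀] using (hf.mono_of_mem_nhdsWithin (Icc_mem_nhdsGT hT)).tendsto
  have hpow : Tendsto (fun t : ℝ => t ^ γ) (𝓝[>] 0) (𝓝 0) := by
    simpa [Real.zero_rpow hγ.ne'] using
      ((Real.continuousAt_rpow_const 0 γ (Or.inr hγ.le)).tendsto).mono_left nhdsWithin_le_nhds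
  have hev : ∀ᶠ t in 𝓝[>] (0 : ℝ), t ≤ T ∧ f t < ε ∧ t ^ γ < ε :=
    Eventually.and (mem_of_superset (Ioc_mem_nhdsGT hT) fun _ ht => ht.2)
      ((hf'.eventually_lt_const hε).and (hpow.eventually_lt_const hε))
  obtain ⟨τ, hτ, hsub⟩ := mem_nhdsGT_iff_exists_Ioc_subset.1 hev
  exact ⟨τ, hτ, (hsub ⟨hτ, le_rfl⟩).1, fun t ht => (hsub ht).2⟩

theorem quadratic_iteration_bound_general (T C γ : ℝ) (hT : 0 < T) (hC : 0 < C) (hγ : 0 < γ)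
    (K : ℕ → ℝ → ℝ)
    (hcont : ∀ m, ContinuousOn (K m) (Set.Icc 0 T))
    (hnonneg : ∀ m, ∀ t ∈ Set.Icc (0 : ℝ) T, 0 ≤ K m t)
    (hK0 : K 0 0 = 0)
    (hrec : ∀ m, ∀ t ∈ Set.Ioc (0 : ℝ) T,
      K (m + 1) t ≤ K 0 t + C * K m t ^ 2 + C * K m t * t ^ γ) :
    ∃ τ : ℝ, 0 < τ ∧ τ ≤ T ∧ ∃ C' > 0, ∀ m, ∀ t ∈ Set.Icc (0 : ℝ) τ,
      K m t ≤ C' * K 0 t := by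
  obtain ⟨τ, hτ, hτT, hsmall⟩ := exists_forall_Ioc_lt_of_continuousWithinAt hT
    (hcont 0 0 ⟨le_rfl, hT.le⟩) hK0 hγ (ε := 1 / (8 * C)) (by positivity)
  have hIcc : Icc 0 τ ⊆ Icc 0 T := Icc_subset_Icc_right hτT
  have hbound : ∀ m, ∀ t ∈ Ioc 0 τ, K m t ≤ 2 * K 0 t := by
    intro m t ht
    have htT : t ∈ Ioc 0 T := ⟨ht.1, ht.2.trans hτT⟩
    have hs : t ^ γ ≤ 1 / (4 * C) :=
      (hsmall t ht).2.le.trans (one_div_le_one_div_of_le (by positivity) (by linarith))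
    exact le_two_mul_of_le_add_mul_sq_add_mul_mul (u := fun m => K m t) hC
      (fun m => hnonneg m t (Ioc_subset_Icc_self htT)) (hsmall t ht).1.le
      hs (fun m => hrec m t htT) m
  refine ⟨τ, hτ, hτT, 2, two_pos, fun m t ht => ?_⟩
  have hcl : closure (Ioc 0 τ) = Icc 0 τ := closure_Ioc hτ.ne
  exact le_on_closure (hbound m) (hcl ▸ (hcont m).mono hIcc)
    (hcl ▸ ((hcont 0).mono hIcc).const_smul (2 : ℝ)) (hcl ▸ ht)

/-- Quadratic fixed-point iteration bound: if `(K_m)` are monotone increasing continuous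
functions on `[0,T]` with `K_0(0) = 0`, `K_m ≤ K_{m+1}`, satisfying
`K_{m+1}(t) ≤ K_0(t) + C K_m(t)² + C K_m(t) t^γ`, then there exist `0 < τ ≤ T` and `C'` with
`K_m(t) ≤ C' K_0(t)` for all `t ∈ [0,τ]` and all `m`. -/
theorem quadratic_iteration_bound (T C γ : ℝ) (hT : 0 < T) (hC : 0 < C) (hγ : 0 < γ)
    (K : ℕ → ℝ → ℝ)
    (hcont : ∀ m, ContinuousOn (K m) (Set.Icc 0 T))
    (hmono : ∀ m, MonotoneOn (K m) (Set.Icc 0 T))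
    (hnonneg : ∀ m, ∀ t ∈ Set.Icc (0 : ℝ) T, 0 ≤ K m t)
    (hK0 : K 0 0 = 0)
    (hle : ∀ m, ∀ t ∈ Set.Icc (0 : ℝ) T, K m t ≤ K (m + 1) t)
    (hrec : ∀ m, ∀ t ∈ Set.Ioc (0 : ℝ) T,
      K (m + 1) t ≤ K 0 t + C * K m t ^ 2 + C * K m t * t ^ γ) :
    ∃ τ : ℝ, 0 < τ ∧ τ ≤ T ∧ ∃ C' > 0, ∀ m, ∀ t ∈ Set.Icc (0 : ℝ) τ,
      K m t ≤ C' * K 0 t :=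
  quadratic_iteration_bound_general T C γ hT hC hγ K hcont hnonneg hK0 hrec
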